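/- Let P(t) be a random row-stochastic matrix with E[P_{ij}(t)] = d_j/l independent of the past, and let Y(t) = (I − diag(a)) P(t) Y(t−1) + diag(a) c(t) where c(t) is independent of P(t). Then the conditional expectation of the in-degree-weighted average X̄(t) = (1/l) Σ_i d_i Y_i(t) given the history up to t−1 equals (Σ_w q_w (1 − a_w)) · X̄(t−1) + (1/l) Σ_i d_i a_i E[c_i(t)], where q_w = Σ_{i : type(i)=w} d_i / l and types determine a_i. -/

import Mathlib

/-! Taking expectations term by term, `E[Σ_j P_ij Y_j] = X̄` for every row `i` because
`E[P_ij] = d_j / l`; grouping `Σ_i d_i (1 - a_i)` by type then gives the factor `Σ_w q_w (1 - a_w)`. -/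

open Finset

theorem sum_mul_sum_mul_comm {S V R : Type*} [Fintype S] [Fintype V] [CommSemiring R]
    (μ : S → R) (P : S → V → R) (Y : V → R) :
    ∑ s, μ s * ∑ j, P s j * Y j = ∑ j, (∑ s, μ s * P s j) * Y j := by
  simp only [mul_sum, sum_mul, mul_assoc]
  exact sum_comm

theorem sum_fiberwise_mul {V Ω R : Type*} [Fintype V] [Fintype Ω] [DecidableEq Ω]
    [CommSemiring R] (type : V → Ω) (g : V → R) (f : Ω → R) :
    ∑ w, (∑ i ∈ univ.filter fun i => type i = w, g i) * f w = ∑ i, g i * f (type i) := by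
  simp only [sum_mul]
  rw [← sum_fiberwise univ type]
  refine sum_congr rfl fun w _ => sum_congr rfl fun i hi => ?_
  rw [(mem_filter.1 hi).2]

theorem sum_mul_linear_comb_comm {S V R : Type*} [Fintype S] [Fintype V] [CommSemiring R]
    (μ : S → R) (κ : R) (w α β : V → R) (X Z : S → V → R) :
    ∑ s, μ s * (κ * ∑ i, w i * (α i * X s i + β i * Z s i))
      = κ * ∑ i, w i * (α i * ∑ s, μ s * X s i + β i * ∑ s, μ s * Z s i) := by
  simp only [mul_sum, mul_add, sum_add_distrib]
  rw [sum_comm, sum_comm (f := fun s i => μ s * (κ * (w i * (β i * Z s i))))]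
  congr 1 <;> refine sum_congr rfl fun i _ => sum_congr rfl fun s _ => by ring

theorem stmt_13_general {V Ω S : Type*} [Fintype V] [Fintype Ω] [Fintype S]
    [DecidableEq Ω]
    (type : V → Ω) (a : Ω → ℝ) (dd : Ω → ℝ)
    (l : ℝ)
    (μ : S → ℝ)
    (P : S → V → V → ℝ)
    (hEP : ∀ i j, ∑ s, μ s * P s i j = dd (type j) / l)
    (c : S → V → ℝ)
    (Ec : V → ℝ) (hEc : ∀ i, ∑ s, μ s * c s i = Ec i)
    (Y : V → ℝ) :
    ∑ s, μ s * ((1 / l) * ∑ i, dd (type i) *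
        ((1 - a (type i)) * (∑ j, P s i j * Y j) + a (type i) * c s i))
      = (∑ w, ((∑ i ∈ Finset.univ.filter fun i => type i = w,
            dd (type i)) / l) * (1 - a w)) *
          ((1 / l) * ∑ i, dd (type i) * Y i)
        + (1 / l) * ∑ i, dd (type i) * a (type i) * Ec i := by
  have hPY : ∀ i, ∑ s, μ s * ∑ j, P s i j * Y j = (1 / l) * ∑ j, dd (type j) * Y j := by
    intro i
    rw [sum_mul_sum_mul_comm, mul_sum]
    exact sum_congr rfl fun j _ => by rw [hEP]; ring
  have hq : ∑ w, ((∑ i ∈ univ.filter fun i => type i = w, dd (type i)) / l) * (1 - a w)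
      = (1 / l) * ∑ i, dd (type i) * (1 - a (type i)) := by
    simp only [sum_div]
    rw [sum_fiberwise_mul type (fun i => dd (type i) / l), mul_sum]
    exact sum_congr rfl fun i _ => by ring
  rw [sum_mul_linear_comb_comm, hq]
  simp only [hPY, hEc]
  generalize (1 / l) * ∑ j, dd (type j) * Y j = Xbar
  simp only [mul_add, sum_add_distrib, mul_sum, sum_mul]
  congr 1 <;> exact sum_congr rfl fun i _ => by ring

/-- one-step conditional expectation of the in-degree weighted
average opinion, over a finite probability space of network/intervention
realizations at time `t`. -/
theorem stmt_13 {V Ω S : Type*} [Fintype V] [Fintype Ω] [Fintype S]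
    [DecidableEq Ω]
    (type : V → Ω) (a : Ω → ℝ) (dd : Ω → ℝ)
    (ha : ∀ w, a w ∈ Set.Icc (0:ℝ) 1) (hdd : ∀ w, 0 < dd w)
    (l : ℝ) (hl : l = ∑ i, dd (type i)) (hlpos : 0 < l)
    (μ : S → ℝ) (hμ0 : ∀ s, 0 ≤ μ s) (hμsum : ∑ s, μ s = 1)
    (P : S → V → V → ℝ)
    (hProw : ∀ s i, ∑ j, P s i j = 1)
    (hEP : ∀ i j, ∑ s, μ s * P s i j = dd (type j) / l)
    (c : S → V → ℝ) (hc : ∀ s i, c s i ∈ Set.Icc (0:ℝ) 1)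
    (Ec : V → ℝ) (hEc : ∀ i, ∑ s, μ s * c s i = Ec i)
    (Y : V → ℝ) (hY : ∀ i, Y i ∈ Set.Icc (0:ℝ) 1) :
    ∑ s, μ s * ((1 / l) * ∑ i, dd (type i) *
        ((1 - a (type i)) * (∑ j, P s i j * Y j) + a (type i) * c s i))
      = (∑ w, ((∑ i ∈ Finset.univ.filter fun i => type i = w,
            dd (type i)) / l) * (1 - a w)) *
          ((1 / l) * ∑ i, dd (type i) * Y i)
        + (1 / l) * ∑ i, dd (type i) * a (type i) * Ec i :=
  stmt_13_general type a dd l μ P hEP c Ec hEc Y
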